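/- arXiv:1606.06489 — 2 statements merged into one kernel-verified Lean document; each statement's English description precedes it below -/
import Mathlib

section
/- Let N ≥ 1, s ∈ (0,1), let Ω ⊆ ℝ^N be an open set, let u ∈ 𝒳^s_0(Ω), and let φ : ℝ^N → ℝ be a Lipschitz continuous function with 0 ≤ φ ≤ 1. Then the pointwise product φ·u belongs to 𝒳^s_0(Ω); in particular φu ∈ L²(ℝ^N), φu vanishes a.e. outside Ω, and the Gagliardo seminorm ‖φu‖_s is finite. -/
open MeasureTheory Real Set Filter
open scoped ENNReal NNReal Topology FourierTransform RealInnerProductSpace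

noncomputable section

/-- Euclidean space `ℝ^N`. -/
abbrev Euc (N : ℕ) := EuclideanSpace ℝ (Fin N)

/-- Square of the `L²(ℝ^N)` norm. -/
def l2NormSq {N : ℕ} (u : Euc N → ℝ) : ℝ := ∫ x, (u x) ^ 2

/-- The `L²(ℝ^N)` norm. -/
def l2Norm {N : ℕ} (u : Euc N → ℝ) : ℝ := Real.sqrt (l2NormSq u)

/-- Square of the Gagliardo seminorm, as an extended nonnegative real. -/
def gagliardoSqE (N : ℕ) (s : ℝ) (u : Euc N → ℝ) : ℝ≥0∞ :=
  ∫⁻ p : Euc N × Euc N,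
    ENNReal.ofReal ((u p.1 - u p.2) ^ 2 / ‖p.1 - p.2‖ ^ ((N : ℝ) + 2 * s))

/-- Square of the Gagliardo seminorm `‖u‖_s²`. -/
def gagliardoSq (N : ℕ) (s : ℝ) (u : Euc N → ℝ) : ℝ := (gagliardoSqE N s u).toReal

/-- The Gagliardo seminorm `‖u‖_s`. -/
def gagliardoNorm (N : ℕ) (s : ℝ) (u : Euc N → ℝ) : ℝ := Real.sqrt (gagliardoSq N s u)

/-- Membership in the fractional Sobolev space `H^s(ℝ^N)`. -/
def MemHs (N : ℕ) (s : ℝ) (u : Euc N → ℝ) : Prop :=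
  MemLp u 2 (volume : Measure (Euc N)) ∧ gagliardoSqE N s u < ⊤

/-- Membership in `𝒳^s_0(Ω)`: `H^s` functions vanishing a.e. outside `Ω`. -/
def MemXs0 (N : ℕ) (s : ℝ) (Ω : Set (Euc N)) (u : Euc N → ℝ) : Prop :=
  MemHs N s u ∧ ∀ᵐ x : Euc N, x ∉ Ω → u x = 0

/-- The norm of `𝒳^s_0(Ω)`: `(‖u‖_{L²}² + ‖u‖_s²)^{1/2}`. -/
def xsNorm (N : ℕ) (s : ℝ) (u : Euc N → ℝ) : ℝ :=
  Real.sqrt (l2NormSq u + gagliardoSq N s u)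

/-- The normalization constant `C(N,s)` of the fractional Laplacian. -/
def fracC (N : ℕ) (s : ℝ) : ℝ :=
  (∫ x : Euc N,
      (1 - Real.cos (if h : 0 < N then x ⟨0, h⟩ else 0)) / ‖x‖ ^ ((N : ℝ) + 2 * s))⁻¹

/-- The bilinear form `[u,v]_s`. -/
def fracForm (N : ℕ) (s : ℝ) (u v : Euc N → ℝ) : ℝ :=
  fracC N s *
    ∫ p : Euc N × Euc N,
      (u p.1 - u p.2) * (v p.1 - v p.2) / ‖p.1 - p.2‖ ^ ((N : ℝ) + 2 * s)

/-- `u` is a weak solution of `(−Δ)^s u = f` in `Ω`, `u = 0` in `ℝ^N ∖ Ω`. -/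
def IsWeakSolution (N : ℕ) (s : ℝ) (Ω : Set (Euc N)) (f u : Euc N → ℝ) : Prop :=
  MemXs0 N s Ω u ∧ ∀ φ : Euc N → ℝ, MemXs0 N s Ω φ → fracForm N s u φ = ∫ x, f x * φ x

/-- The dual norm `‖f‖_{𝒳^s_0(Ω)'}`. -/
def dualNorm (N : ℕ) (s : ℝ) (Ω : Set (Euc N)) (f : Euc N → ℝ) : ℝ :=
  sSup {c : ℝ | ∃ φ : Euc N → ℝ, MemXs0 N s Ω φ ∧ xsNorm N s φ ≤ 1 ∧ c = ∫ x, f x * φ x}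

/-- Square of the `H^{−s}(ℝ^N)` norm, via the Fourier transform. -/
def hNegNormSq (N : ℕ) (s : ℝ) (f : Euc N → ℝ) : ℝ :=
  ∫ ξ : Euc N, (1 + ‖ξ‖ ^ 2) ^ (-s) * ‖𝓕 (fun x : Euc N => (f x : ℂ)) ξ‖ ^ 2

/-- The `H^{−s}(ℝ^N)` norm. -/
def hNegNorm (N : ℕ) (s : ℝ) (f : Euc N → ℝ) : ℝ := Real.sqrt (hNegNormSq N s f)

/-- The localized translation `T_h u = φ·u(·+h) + (1−φ)·u`. -/
def Tmap {N : ℕ} (φ u : Euc N → ℝ) (h : Euc N) : Euc N → ℝ :=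
  fun x => φ x * u (x + h) + (1 - φ x) * u x

/-- The open cone `C_{ρ,θ}(n)`. -/
def cone (N : ℕ) (ρ θ : ℝ) (n : Euc N) : Set (Euc N) :=
  {v | 0 < ‖v‖ ∧ ‖v‖ < ρ ∧ ‖v‖ * Real.cos θ < ⟪v, n⟫}

/-- The `(ρ,θ)`-Lipschitz cone condition. -/
def LipConeCond (N : ℕ) (ρ θ : ℝ) (Ω : Set (Euc N)) : Prop :=
  ∀ x₀ : Euc N, ∃ n : Euc N, ‖n‖ = 1 ∧
    (∀ v ∈ cone N ρ θ n, ∀ y ∈ Metric.ball x₀ (3 * ρ) ∩ Ω, y - v ∈ Ω) ∧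
    (∀ v ∈ cone N ρ θ n, ∀ y ∈ Metric.ball x₀ (3 * ρ) \ Ω, y + v ∉ Ω)

/-- The excess `e(E,F) = sup_{x ∈ E} dist(x,F)` (valued in `ℝ≥0∞`). -/
def setExcess {N : ℕ} (E F : Set (Euc N)) : ℝ≥0∞ := ⨆ x ∈ E, EMetric.infEdist x F

/-- The distance `𝔡(E,F) = e(E,F) + e^c(F,E)` (valued in `ℝ≥0∞`). -/
def dFrontE {N : ℕ} (E F : Set (Euc N)) : ℝ≥0∞ := setExcess E F + setExcess Eᶜ Fᶜ

/-- The distance `𝔡(E,F)` as a real number. -/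
def dFront {N : ℕ} (E F : Set (Euc N)) : ℝ := (dFrontE E F).toReal

/-- The complementary Hausdorff distance `d_H^c(E,F)` (valued in `ℝ≥0∞`). -/
def dHcE {N : ℕ} (E F : Set (Euc N)) : ℝ≥0∞ := setExcess Eᶜ Fᶜ + setExcess Fᶜ Eᶜ

/-- The complementary Hausdorff distance as a real number. -/
def dHc {N : ℕ} (E F : Set (Euc N)) : ℝ := (dHcE E F).toReal

/-- The eroded set `F^{−ε}`. -/
def shrinkSet {N : ℕ} (F : Set (Euc N)) (ε : ℝ) : Set (Euc N) :=
  {x ∈ F | Metric.ball x ε ⊆ F}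

/-- The enlarged set `F^{ε}`. -/
def enlargeSet {N : ℕ} (F : Set (Euc N)) (ε : ℝ) : Set (Euc N) :=
  {x | EMetric.infEdist x F < ENNReal.ofReal ε}

/-- The Rayleigh quotient `C(N,s)‖u‖_s²/‖u‖_{L²}²`. -/
def rayleigh (N : ℕ) (s : ℝ) (u : Euc N → ℝ) : ℝ :=
  fracC N s * gagliardoSq N s u / l2NormSq u

/-- The `n`-th eigenvalue of `(−Δ)^s` in `Ω`, via the Rayleigh min–max principle. -/
def nthEigenvalue (N : ℕ) (s : ℝ) (Ω : Set (Euc N)) (n : ℕ) : ℝ :=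
  sInf {μ : ℝ |
    ∃ V : Submodule ℝ (Euc N → ℝ), Module.finrank ℝ V = n ∧ (∀ u ∈ V, MemXs0 N s Ω u) ∧
      μ = sSup (rayleigh N s '' {u : Euc N → ℝ | u ∈ V ∧ u ≠ 0})}

/-- `(u,λ)` is an eigencouple of `(−Δ)^s` in `Ω`. -/
def IsEigenpair (N : ℕ) (s : ℝ) (Ω : Set (Euc N)) (lam : ℝ) (u : Euc N → ℝ) : Prop :=
  MemXs0 N s Ω u ∧ ¬ (u =ᵐ[(volume : Measure (Euc N))] 0) ∧
    ∀ φ : Euc N → ℝ, MemXs0 N s Ω φ → fracForm N s u φ = lam * ∫ x, u x * φ x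

/-- The fractional Laplacian `(−Δ)^t φ` given by the singular integral. -/
def fracLapI (N : ℕ) (t : ℝ) (φ : Euc N → ℝ) : Euc N → ℝ :=
  fun x => fracC N t * ∫ y : Euc N, (φ x - φ y) / ‖x - y‖ ^ ((N : ℝ) + 2 * t)

/-- The fractional Laplacian `(−Δ)^t w` given by the Fourier transform. -/
def fracLapF (N : ℕ) (t : ℝ) (w : Euc N → ℝ) : Euc N → ℝ :=
  fun x =>
    (𝓕⁻ (fun ξ : Euc N => ((‖ξ‖ ^ (2 * t) : ℝ) : ℂ) * 𝓕 (fun y : Euc N => (w y : ℂ)) ξ) x).re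

/-- Second difference `u(·+2h) − 2u(·+h) + u`. -/
def secondDiff {N : ℕ} (u : Euc N → ℝ) (h : Euc N) : Euc N → ℝ :=
  fun x => u (x + (2 : ℝ) • h) - 2 * u (x + h) + u x

/-- The Besov seminorm for `r ∈ (0,1]`. -/
def besovSemiBase (N : ℕ) (r : ℝ) (u : Euc N → ℝ) : ℝ :=
  sSup {c : ℝ | ∃ h : Euc N, h ≠ 0 ∧ c = l2Norm (secondDiff u h) / ‖h‖ ^ r}

/-- Membership in `B^r_{2,∞}(ℝ^N)` for `r ∈ (0,1]`. -/
def MemBesovBase (N : ℕ) (r : ℝ) (u : Euc N → ℝ) : Prop :=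
  MemLp u 2 (volume : Measure (Euc N)) ∧
    ∃ C : ℝ, ∀ h : Euc N, h ≠ 0 → l2Norm (secondDiff u h) ≤ C * ‖h‖ ^ r

/-- The `B^r_{2,∞}` norm for `r ∈ (0,1]`. -/
def besovNormBase (N : ℕ) (r : ℝ) (u : Euc N → ℝ) : ℝ := l2Norm u + besovSemiBase N r u

/-- `g` is the distributional partial derivative `∂u/∂x_i`. -/
def IsDistribDeriv (N : ℕ) (i : Fin N) (u g : Euc N → ℝ) : Prop :=
  ∀ φ : Euc N → ℝ, ContDiff ℝ (⊤ : ℕ∞) φ → HasCompactSupport φ →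
    ∫ x, u x * fderiv ℝ φ x (EuclideanSpace.single i 1) = - ∫ x, g x * φ x

/-- Auxiliary (fueled) definition of membership in `B^r_{2,∞}(ℝ^N)`. -/
def MemBesovAux (N : ℕ) : ℕ → ℝ → (Euc N → ℝ) → Prop
  | 0, r, u => MemBesovBase N r u
  | k + 1, r, u =>
      MemLp u 2 (volume : Measure (Euc N)) ∧
        ∀ i : Fin N, ∃ g : Euc N → ℝ, IsDistribDeriv N i u g ∧ MemBesovAux N k (r - 1) g

/-- Auxiliary (fueled) definition of the `B^r_{2,∞}` norm. -/
def besovNormAux (N : ℕ) : ℕ → ℝ → (Euc N → ℝ) → ℝ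
  | 0, r, u => besovNormBase N r u
  | k + 1, r, u =>
      l2Norm u + ∑ i : Fin N,
        sInf {c : ℝ | ∃ g : Euc N → ℝ, IsDistribDeriv N i u g ∧ c = besovNormAux N k (r - 1) g}

/-- Membership in the Besov space `B^r_{2,∞}(ℝ^N)`, `r > 0`. -/
def MemBesov (N : ℕ) (r : ℝ) (u : Euc N → ℝ) : Prop := MemBesovAux N (Nat.ceil r - 1) r u

/-- The norm of the Besov space `B^r_{2,∞}(ℝ^N)`, `r > 0`. -/
def besovNorm (N : ℕ) (r : ℝ) (u : Euc N → ℝ) : ℝ := besovNormAux N (Nat.ceil r - 1) r u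

/-- The excess `e_s(M,K)` between subspaces of `𝒳^s_0(D)` (with the norm `‖·‖_s`). -/
def subExcess (N : ℕ) (s : ℝ) (M K : Set (Euc N → ℝ)) : ℝ :=
  sSup ((fun x => sInf ((fun y => gagliardoNorm N s (x - y)) '' K)) ''
    {x | x ∈ M ∧ gagliardoNorm N s x = 1})

/-- The Hausdorff distance `d_{H,s}(M,K)` between subspaces of `𝒳^s_0(D)`. -/
def subHausdorff (N : ℕ) (s : ℝ) (M K : Set (Euc N → ℝ)) : ℝ :=
  subExcess N s M K + subExcess N s K M
lemma aux_I_finite (N : ℕ) (hN : 1 ≤ N) (p : ℝ) (hp1 : (N:ℝ) < p) (hp2 : p < (N:ℝ) + 2)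
    (L : ℝ≥0) :
    ∫⁻ z : Euc N, ENNReal.ofReal (2 * min ((L:ℝ)^2 * ‖z‖^2) 1 / ‖z‖ ^ p) < ⊤ := by
  haveI : Nonempty (Fin N) := ⟨⟨0, hN⟩⟩
  have hNpos : (0:ℝ) < N := by exact_mod_cast hN
  have hppos : 0 < p := lt_trans hNpos hp1
  set G : Euc N → ℝ := fun z => 2 * min ((L:ℝ)^2 * ‖z‖^2) 1 / ‖z‖ ^ p with hG_def
  have hfinrank : (Module.finrank ℝ (Euc N) : ℝ) = (N:ℝ) := by
    simp [finrank_euclideanSpace]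
  have hminnn : ∀ z : Euc N, (0:ℝ) ≤ min ((L:ℝ)^2 * ‖z‖^2) 1 :=
    fun z => le_min (by positivity) one_pos.le
  have hGnonneg : ∀ z, 0 ≤ G z := by
    intro z
    apply div_nonneg _ (Real.rpow_nonneg (norm_nonneg _) _)
    have := hminnn z; linarith
  rw [← lintegral_add_compl (fun z => ENNReal.ofReal (G z))
    (measurableSet_ball (x := (0:Euc N)) (ε := 1)) (μ := volume)]
  apply ENNReal.add_lt_top.2
  constructor
  · -- the singular part, near 0
    set c : ℕ → ℝ := fun k => (2:ℝ) ^ (-(k:ℝ)) with hc_def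
    have hcpos : ∀ k, 0 < c k := fun k => Real.rpow_pos_of_pos two_pos _
    have hc0 : c 0 = 1 := by simp [hc_def]
    have hcpow : ∀ k : ℕ, c k = ((2:ℝ)⁻¹) ^ k := by
      intro k
      show (2:ℝ) ^ (-(k:ℝ)) = _
      rw [Real.rpow_neg two_pos.le, Real.rpow_natCast, inv_pow]
    set S : ℕ → Set (Euc N) := fun k =>
      Metric.closedBall (0 : Euc N) (c k) \ Metric.closedBall 0 (c (k+1)) with hS_def
    have hsub : Metric.ball (0 : Euc N) 1 ⊆ {0} ∪ ⋃ k, S k := by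
      intro z hz
      rcases eq_or_ne z 0 with rfl | hz0
      · exact Or.inl rfl
      have hzpos : 0 < ‖z‖ := norm_pos_iff.2 hz0
      have hzlt : ‖z‖ < 1 := by simpa using mem_ball_iff_norm.1 hz
      have hex : ∃ n, c n < ‖z‖ := by
        obtain ⟨n, hn⟩ := exists_pow_lt_of_lt_one hzpos (by norm_num : (2:ℝ)⁻¹ < 1)
        exact ⟨n, by rw [hcpow]; exact hn⟩
      classical
      have hn : c (Nat.find hex) < ‖z‖ := Nat.find_spec hex
      have hn0 : Nat.find hex ≠ 0 := by
        intro h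
        rw [h, hc0] at hn
        exact absurd hn (not_lt.2 hzlt.le)
      obtain ⟨k, hk⟩ := Nat.exists_eq_succ_of_ne_zero hn0
      have hn' : c (k+1) < ‖z‖ := by rw [hk] at hn; exact hn
      have hkmin : ¬ c k < ‖z‖ := Nat.find_min hex (by omega)
      refine Or.inr (mem_iUnion.2 ⟨k, ?_, ?_⟩)
      · simpa [dist_eq_norm] using not_lt.1 hkmin
      · simpa [dist_eq_norm] using not_le.2 hn'
    have hC : volume (Metric.ball (0:Euc N) 1) < ⊤ := measure_ball_lt_top
    set C : ℝ≥0∞ := volume (Metric.ball (0:Euc N) 1) with hC_def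
    set q : ℝ := (2:ℝ) ^ (p - 2 - N) with hq_def
    have hq0 : 0 < q := Real.rpow_pos_of_pos two_pos _
    have hq1 : q < 1 :=
      Real.rpow_lt_one_of_one_lt_of_neg one_lt_two (by linarith)
    set D : ℝ := 2 * (L:ℝ)^2 * (2:ℝ)^p with hD_def
    have hD0 : 0 ≤ D := by positivity
    have hterm : ∀ k : ℕ, ∫⁻ z in S k, ENNReal.ofReal (G z) ≤
        ENNReal.ofReal (D * q ^ k) * C := by
      intro k
      have hGk : ∀ z ∈ S k, ENNReal.ofReal (G z) ≤
          ENNReal.ofReal (2 * (L:ℝ)^2 * (c k)^2 / (c (k+1)) ^ p) := by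
        intro z hz
        obtain ⟨hz1, hz2⟩ := hz
        have hz1' : ‖z‖ ≤ c k := by simpa [dist_eq_norm] using hz1
        have hz2' : c (k+1) < ‖z‖ := by
          have := (not_le).1 (fun h => hz2 (by simpa [dist_eq_norm] using h))
          exact this
        apply ENNReal.ofReal_le_ofReal
        apply div_le_div₀ (by positivity) ?_ (Real.rpow_pos_of_pos (hcpos _) _) ?_
        · have h1 : min ((L:ℝ)^2*‖z‖^2) 1 ≤ (L:ℝ)^2*‖z‖^2 := min_le_left _ _
          have h2 : ‖z‖^2 ≤ (c k)^2 := by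
            apply sq_le_sq' _ hz1'
            have := norm_nonneg z; have := hcpos k; linarith
          nlinarith [sq_nonneg (L:ℝ)]
        · exact Real.rpow_le_rpow (hcpos _).le hz2'.le hppos.le
      have hSk : volume (S k) ≤ ENNReal.ofReal ((c k)^(N:ℕ)) * C := by
        calc volume (S k) ≤ volume (Metric.closedBall (0:Euc N) (c k)) :=
              measure_mono diff_subset
          _ = ENNReal.ofReal ((c k)^(Module.finrank ℝ (Euc N))) * C := by
              rw [Measure.addHaar_closedBall _ _ (hcpos k).le]
          _ = _ := by rw [finrank_euclideanSpace]; simp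
      calc ∫⁻ z in S k, ENNReal.ofReal (G z)
          ≤ ∫⁻ _ in S k, ENNReal.ofReal (2 * (L:ℝ)^2 * (c k)^2 / (c (k+1)) ^ p) :=
            setLIntegral_mono measurable_const hGk
        _ = ENNReal.ofReal (2 * (L:ℝ)^2 * (c k)^2 / (c (k+1)) ^ p) * volume (S k) := by
            rw [setLIntegral_const]
        _ ≤ ENNReal.ofReal (2 * (L:ℝ)^2 * (c k)^2 / (c (k+1)) ^ p) *
              (ENNReal.ofReal ((c k)^(N:ℕ)) * C) := by gcongr
        _ = ENNReal.ofReal (2 * (L:ℝ)^2 * (c k)^2 / (c (k+1)) ^ p * (c k)^(N:ℕ)) * C := by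
            rw [← mul_assoc, ← ENNReal.ofReal_mul (by positivity)]
        _ = ENNReal.ofReal (D * q ^ k) * C := by
            congr 1
            apply congrArg
            have e1 : (c k)^(2:ℕ) = (2:ℝ) ^ ((-(k:ℝ)) * 2) := by
              rw [hc_def, ← Real.rpow_natCast ((2:ℝ)^(-(k:ℝ))) 2, ← Real.rpow_mul two_pos.le]
              norm_num
            have e2 : (c k)^(N:ℕ) = (2:ℝ) ^ ((-(k:ℝ)) * N) := by
              rw [hc_def, ← Real.rpow_natCast ((2:ℝ)^(-(k:ℝ))) N, ← Real.rpow_mul two_pos.le]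
            have e3 : (c (k+1))^p = (2:ℝ) ^ ((-((k:ℝ)+1)) * p) := by
              rw [hc_def, ← Real.rpow_mul two_pos.le]
              push_cast
              ring_nf
            have e4 : q ^ k = (2:ℝ) ^ ((p-2-N) * k) := by
              rw [hq_def, ← Real.rpow_natCast ((2:ℝ)^(p-2-(N:ℝ))) k, ← Real.rpow_mul two_pos.le]
            have eL : 2 * (L:ℝ)^2 * (c k)^2 / (c (k+1)) ^ p * (c k)^(N:ℕ) =
                2*(L:ℝ)^2 * ((2:ℝ)^((-(k:ℝ))*2 + (-(k:ℝ))*N - (-((k:ℝ)+1))*p)) := by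
              rw [e1, e2, e3, Real.rpow_sub two_pos, Real.rpow_add two_pos]
              ring
            have eR : D * q^k = 2*(L:ℝ)^2 * ((2:ℝ)^(p + (p-2-N)*k)) := by
              rw [hD_def, e4, Real.rpow_add two_pos]
              ring
            rw [eL, eR]
            congr 1
            congr 1
            push_cast
            ring
    calc ∫⁻ z in Metric.ball (0:Euc N) 1, ENNReal.ofReal (G z)
        ≤ ∫⁻ z in ({0} ∪ ⋃ k, S k : Set (Euc N)), ENNReal.ofReal (G z) :=
          lintegral_mono_set hsub
      _ ≤ (∫⁻ z in ({0} : Set (Euc N)), ENNReal.ofReal (G z)) +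
          ∫⁻ z in (⋃ k, S k : Set (Euc N)), ENNReal.ofReal (G z) := lintegral_union_le _ _ _
      _ ≤ 0 + ∑' k, ∫⁻ z in S k, ENNReal.ofReal (G z) := by
          gcongr
          · exact le_of_eq (setLIntegral_measure_zero _ _ (measure_singleton _))
          · exact lintegral_iUnion_le _ _
      _ ≤ 0 + ∑' k : ℕ, ENNReal.ofReal (D * q ^ k) * C := by
          gcongr with k
          exact hterm k
      _ = (ENNReal.ofReal D * C) * ∑' k : ℕ, (ENNReal.ofReal q) ^ k := by
          rw [zero_add, ← ENNReal.tsum_mul_left]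
          congr 1 with k
          rw [ENNReal.ofReal_mul hD0, ENNReal.ofReal_pow hq0.le]
          ring
      _ < ⊤ := by
          rw [ENNReal.tsum_geometric]
          refine ENNReal.mul_lt_top (ENNReal.mul_lt_top ENNReal.ofReal_lt_top hC) ?_
          exact ENNReal.inv_lt_top.2 (tsub_pos_of_lt (ENNReal.ofReal_lt_one.2 hq1))
  · -- the tail
    have hpN : (Module.finrank ℝ (Euc N) : ℝ) < p := by
      rw [hfinrank]; exact hp1
    have hbound : ∀ z : Euc N, z ∈ (Metric.ball (0:Euc N) 1)ᶜ →
        ENNReal.ofReal (G z) ≤ ENNReal.ofReal (2 * 2^p * (1 + ‖z‖) ^ (-p)) := by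
      intro z hz
      have hz1 : 1 ≤ ‖z‖ := by simpa [dist_eq_norm] using hz
      have hzpos : (0:ℝ) < ‖z‖ := lt_of_lt_of_le one_pos hz1
      apply ENNReal.ofReal_le_ofReal
      rw [hG_def, div_le_iff₀ (Real.rpow_pos_of_pos hzpos _)]
      have e1 : (1+‖z‖)^p * (1+‖z‖)^(-p) = 1 := by
        rw [← Real.rpow_add (by positivity)]; simp
      have e2 : (1+‖z‖)^p ≤ 2^p * ‖z‖^p := by
        rw [← Real.mul_rpow (by norm_num) (norm_nonneg z)]
        exact Real.rpow_le_rpow (by positivity) (by linarith) hppos.le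
      have e3 : (0:ℝ) ≤ (1+‖z‖)^(-p) := Real.rpow_nonneg (by positivity) _
      have hmin := hminnn z
      have hmin1 : min ((L:ℝ)^2*‖z‖^2) 1 ≤ 1 := min_le_right _ _
      calc 2 * min ((L:ℝ)^2*‖z‖^2) 1 ≤ 2 := by linarith
        _ = 2 * ((1+‖z‖)^p * (1+‖z‖)^(-p)) := by rw [e1]; ring
        _ ≤ 2 * ((2^p * ‖z‖^p) * (1+‖z‖)^(-p)) := by
            have := mul_le_mul_of_nonneg_right e2 e3
            linarith
        _ = 2 * 2^p * (1+‖z‖)^(-p) * ‖z‖^p := by ring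
    calc ∫⁻ z in (Metric.ball (0:Euc N) 1)ᶜ, ENNReal.ofReal (G z)
        ≤ ∫⁻ z in (Metric.ball (0:Euc N) 1)ᶜ, ENNReal.ofReal (2 * 2^p * (1 + ‖z‖) ^ (-p)) := by
          apply setLIntegral_mono ?_ hbound
          apply Measurable.ennreal_ofReal
          apply Measurable.const_mul
          exact ((continuous_const.add continuous_norm).rpow_const
            (fun x => Or.inl (ne_of_gt (add_pos_of_pos_of_nonneg one_pos (norm_nonneg x))))).measurable
      _ ≤ ∫⁻ z : Euc N, ENNReal.ofReal (2 * 2^p * (1 + ‖z‖) ^ (-p)) :=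
          setLIntegral_le_lintegral _ _
      _ = ENNReal.ofReal (2 * 2^p) * ∫⁻ z : Euc N, ENNReal.ofReal ((1 + ‖z‖) ^ (-p)) := by
          rw [← lintegral_const_mul' _ _ ENNReal.ofReal_lt_top.ne]
          congr 1 with z
          rw [← ENNReal.ofReal_mul (by positivity)]
      _ < ⊤ := ENNReal.mul_lt_top ENNReal.ofReal_lt_top
          (finite_integral_one_add_norm hpN)

set_option maxHeartbeats 1000000 in
/-- Lemma 3.3: the product of an `𝒳^s_0(Ω)` function with a bounded
Lipschitz cut-off function belongs to `𝒳^s_0(Ω)`. -/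
theorem statement_10 (N : ℕ) (hN : 1 ≤ N) (s : ℝ) (hs : s ∈ Set.Ioo (0 : ℝ) 1)
    (Ω : Set (Euc N)) (hΩ : IsOpen Ω) (u φ : Euc N → ℝ) (L : ℝ≥0)
    (hu : MemXs0 N s Ω u) (hφ : LipschitzWith L φ) (hφ01 : ∀ x, 0 ≤ φ x ∧ φ x ≤ 1) :
    MemXs0 N s Ω (fun x => φ x * u x) := by
  obtain ⟨⟨huL2, huG⟩, huΩ⟩ := hu
  have humeas : AEStronglyMeasurable u (volume : Measure (Euc N)) := huL2.1
  have hpmeas : AEStronglyMeasurable (fun x => φ x * u x) (volume : Measure (Euc N)) :=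
    (hφ.continuous.aestronglyMeasurable).mul humeas
  have hprodL2 : MemLp (fun x => φ x * u x) 2 (volume : Measure (Euc N)) := by
    refine MemLp.of_le huL2 hpmeas (Filter.Eventually.of_forall fun x => ?_)
    have h1 := (hφ01 x).1
    have h2 := (hφ01 x).2
    simp only [Real.norm_eq_abs, abs_mul]
    calc |φ x| * |u x| ≤ 1 * |u x| := by
          apply mul_le_mul_of_nonneg_right _ (abs_nonneg _)
          rw [abs_of_nonneg h1]; exact h2
      _ = |u x| := one_mul _
  refine ⟨⟨hprodL2, ?_⟩, ?_⟩
  swap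
  · filter_upwards [huΩ] with x hx hxΩ
    rw [hx hxΩ, mul_zero]
  -- finiteness of the Gagliardo seminorm
  set p : ℝ := (N:ℝ) + 2*s with hp_def
  have hNpos : (0:ℝ) < N := by exact_mod_cast hN
  have hppos : 0 < p := by have := hs.1; positivity
  set G : Euc N → ℝ := fun z => 2 * min ((L:ℝ)^2 * ‖z‖^2) 1 / ‖z‖ ^ p with hG_def
  have hminnn : ∀ z : Euc N, (0:ℝ) ≤ min ((L:ℝ)^2 * ‖z‖^2) 1 :=
    fun z => le_min (by positivity) one_pos.le
  have hGnonneg : ∀ z, 0 ≤ G z := by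
    intro z
    apply div_nonneg _ (Real.rpow_nonneg (norm_nonneg _) _)
    have := hminnn z; linarith
  have hGmeas : Measurable G := by
    apply Measurable.div
    · exact ((((measurable_norm.pow_const 2).const_mul ((L:ℝ)^2)).min measurable_const).const_mul 2)
    · exact (continuous_norm.rpow_const (fun x => Or.inr hppos.le)).measurable
  have huae : AEMeasurable u (volume : Measure (Euc N)) := humeas.aemeasurable
  have hu1 : AEMeasurable (fun q : Euc N × Euc N => u q.1) volume := by
    rw [MeasureTheory.Measure.volume_eq_prod (Euc N) (Euc N)]
    exact huae.comp_quasiMeasurePreserving Measure.quasiMeasurePreserving_fst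
  have hu2 : AEMeasurable (fun q : Euc N × Euc N => u q.2) volume := by
    rw [MeasureTheory.Measure.volume_eq_prod (Euc N) (Euc N)]
    exact huae.comp_quasiMeasurePreserving Measure.quasiMeasurePreserving_snd
  have hsubmeas : Measurable (fun q : Euc N × Euc N => q.1 - q.2) :=
    measurable_fst.sub measurable_snd
  have hdenmeas : Measurable (fun q : Euc N × Euc N => ‖q.1 - q.2‖ ^ p) :=
    ((continuous_fst.sub continuous_snd).norm.rpow_const (fun x => Or.inr hppos.le)).measurable
  -- the two dominating functions
  set F1 : Euc N × Euc N → ℝ≥0∞ := fun q =>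
    ENNReal.ofReal (2 * (u q.1 - u q.2)^2 / ‖q.1 - q.2‖ ^ p) with hF1_def
  set F2 : Euc N × Euc N → ℝ≥0∞ := fun q =>
    ENNReal.ofReal (G (q.1 - q.2)) * ENNReal.ofReal ((u q.2)^2) with hF2_def
  have hF1ae : AEMeasurable F1 volume := by
    apply ENNReal.measurable_ofReal.comp_aemeasurable
    exact (((hu1.sub hu2).pow_const 2).const_mul 2).div hdenmeas.aemeasurable
  have hF2ae : AEMeasurable F2 volume := by
    refine AEMeasurable.mul (f := fun q : Euc N × Euc N => ENNReal.ofReal (G (q.1 - q.2))) (g := fun q : Euc N × Euc N => ENNReal.ofReal ((u q.2)^2)) ?_ ?_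
    · exact ((hGmeas.comp hsubmeas).ennreal_ofReal).aemeasurable
    · exact ENNReal.measurable_ofReal.comp_aemeasurable (hu2.pow_const 2)
  -- pointwise bound
  have hkey : ∀ q : Euc N × Euc N,
      ENNReal.ofReal ((φ q.1 * u q.1 - φ q.2 * u q.2) ^ 2 / ‖q.1 - q.2‖ ^ p) ≤
        F1 q + F2 q := by
    rintro ⟨x, y⟩
    simp only [hF1_def, hF2_def]
    rw [← ENNReal.ofReal_mul (hGnonneg _), ← ENNReal.ofReal_add (by
        apply div_nonneg (by positivity) (Real.rpow_nonneg (norm_nonneg _) _))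
      (mul_nonneg (hGnonneg _) (sq_nonneg _))]
    apply ENNReal.ofReal_le_ofReal
    rcases eq_or_ne (‖x - y‖ ^ p) 0 with hd | hd
    · simp only [hd, div_zero]
      have : G (x - y) = 0 := by
        simp only [hG_def]; rw [hd, div_zero]
      rw [this]
      positivity
    have hdpos : 0 < ‖x - y‖ ^ p :=
      lt_of_le_of_ne (Real.rpow_nonneg (norm_nonneg _) _) (Ne.symm hd)
    have hGxy : G (x - y) * (u y)^2 = 2 * min ((L:ℝ)^2 * ‖x-y‖^2) 1 * (u y)^2 / ‖x-y‖^p := by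
      simp only [hG_def]; ring
    rw [hGxy, ← add_div, div_le_div_iff_of_pos_right hdpos]
    -- numerator inequality
    have h1x := (hφ01 x).1
    have h2x := (hφ01 x).2
    have h1y := (hφ01 y).1
    have h2y := (hφ01 y).2
    have hlip : |φ x - φ y| ≤ (L:ℝ) * ‖x - y‖ := by
      have := hφ.dist_le_mul x y
      rwa [Real.dist_eq, dist_eq_norm] at this
    have habs1 : |φ x - φ y| ≤ 1 := by
      rw [abs_le]; constructor <;> linarith
    have hsq : (φ x - φ y)^2 ≤ min ((L:ℝ)^2 * ‖x-y‖^2) 1 := by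
      apply le_min
      · have := mul_self_le_mul_self (abs_nonneg _) hlip
        rw [← sq_abs, sq] at *
        nlinarith [norm_nonneg (x - y), NNReal.coe_nonneg L]
      · have := mul_self_le_mul_self (abs_nonneg _) habs1
        rw [← sq_abs, sq] at *
        nlinarith
    have hdecomp : φ x * u x - φ y * u y = φ x * (u x - u y) + (φ x - φ y) * u y := by ring
    rw [hdecomp]
    have hA : (φ x * (u x - u y))^2 ≤ (u x - u y)^2 := by
      have hφsq : φ x ^ 2 ≤ 1 := by nlinarith
      calc (φ x * (u x - u y))^2 = φ x ^ 2 * (u x - u y)^2 := by ring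
        _ ≤ 1 * (u x - u y)^2 := mul_le_mul_of_nonneg_right hφsq (sq_nonneg _)
        _ = (u x - u y)^2 := one_mul _
    have hB : ((φ x - φ y) * u y)^2 ≤ min ((L:ℝ)^2 * ‖x-y‖^2) 1 * (u y)^2 := by
      rw [mul_pow]
      exact mul_le_mul_of_nonneg_right hsq (sq_nonneg _)
    have hsum : (φ x * (u x - u y) + (φ x - φ y) * u y)^2 ≤
        2*(φ x * (u x - u y))^2 + 2*((φ x - φ y) * u y)^2 := by
      nlinarith [sq_nonneg (φ x * (u x - u y) - (φ x - φ y) * u y)]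
    linarith
  -- put it together
  have hsplit : gagliardoSqE N s (fun x => φ x * u x) ≤
      (∫⁻ q : Euc N × Euc N, F1 q) + ∫⁻ q : Euc N × Euc N, F2 q := by
    calc gagliardoSqE N s (fun x => φ x * u x)
        ≤ ∫⁻ q : Euc N × Euc N, (F1 q + F2 q) := lintegral_mono hkey
      _ = (∫⁻ q : Euc N × Euc N, F1 q) + ∫⁻ q : Euc N × Euc N, F2 q :=
          lintegral_add_left' hF1ae _
  have hF1fin : (∫⁻ q : Euc N × Euc N, F1 q) < ⊤ := by
    have : ∀ q : Euc N × Euc N, F1 q =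
        2 * ENNReal.ofReal ((u q.1 - u q.2)^2 / ‖q.1 - q.2‖ ^ p) := by
      intro q
      simp only [hF1_def]
      rw [mul_div_assoc, ENNReal.ofReal_mul (by norm_num)]
      norm_num
    calc (∫⁻ q : Euc N × Euc N, F1 q)
        = ∫⁻ q : Euc N × Euc N, 2 * ENNReal.ofReal ((u q.1 - u q.2)^2 / ‖q.1 - q.2‖ ^ p) := by
          simp_rw [this]
      _ = 2 * ∫⁻ q : Euc N × Euc N, ENNReal.ofReal ((u q.1 - u q.2)^2 / ‖q.1 - q.2‖ ^ p) :=
          lintegral_const_mul' 2 _ (by norm_num)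
      _ = 2 * gagliardoSqE N s u := rfl
      _ < ⊤ := ENNReal.mul_lt_top (by norm_num) huG
  have hIfin : ∫⁻ z : Euc N, ENNReal.ofReal (G z) < ⊤ := by
    have := aux_I_finite N hN p (by rw [hp_def]; have := hs.1; linarith)
      (by rw [hp_def]; have := hs.2; linarith) L
    exact this
  have hL2fin : ∫⁻ y : Euc N, ENNReal.ofReal ((u y)^2) < ⊤ := by
    have hint : Integrable (fun y => (u y)^2) (volume : Measure (Euc N)) := huL2.integrable_sq
    have := hint.2
    rw [hasFiniteIntegral_iff_norm] at this
    refine lt_of_le_of_lt (lintegral_mono fun y => ?_) this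
    apply ENNReal.ofReal_le_ofReal
    exact le_abs_self _
  have hF2fin : (∫⁻ q : Euc N × Euc N, F2 q) < ⊤ := by
    have hcalc : (∫⁻ q : Euc N × Euc N, F2 q) =
        (∫⁻ z : Euc N, ENNReal.ofReal (G z)) * ∫⁻ y : Euc N, ENNReal.ofReal ((u y)^2) := by
      rw [hF2_def, MeasureTheory.Measure.volume_eq_prod (Euc N) (Euc N)]
      rw [lintegral_prod_symm _ (by rw [← MeasureTheory.Measure.volume_eq_prod (Euc N) (Euc N)]; exact hF2ae)]
      have hinner : ∀ y : Euc N, ∫⁻ x, ENNReal.ofReal (G (x - y)) * ENNReal.ofReal ((u y)^2) =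
          (∫⁻ z : Euc N, ENNReal.ofReal (G z)) * ENNReal.ofReal ((u y)^2) := by
        intro y
        rw [lintegral_mul_const' _ _ ENNReal.ofReal_lt_top.ne]
        congr 1
        exact lintegral_sub_right_eq_self (fun z => ENNReal.ofReal (G z)) y
      simp_rw [hinner]
      rw [lintegral_const_mul' _ _ hIfin.ne]
    rw [hcalc]
    exact ENNReal.mul_lt_top hIfin hL2fin
  exact lt_of_le_of_lt hsplit (ENNReal.add_lt_top.2 ⟨hF1fin, hF2fin⟩)
end
end

section
/- Let n be a unit vector in ℝ^N, let ρ > 0 and θ ∈ (0,π/2). Assume 0 < t < ρ/2 and set ε := t sin θ and x := t·n. Then the open ball B_ε(x) is contained in the cone C_{ρ,θ}(n). -/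
open MeasureTheory Real Set Filter
open scoped ENNReal NNReal Topology FourierTransform RealInnerProductSpace

noncomputable section

/-- Lemma 4.4: a ball inside the cone `C_{ρ,θ}(n)`. -/
theorem statement_14 (N : ℕ) (n : Euc N) (hn : ‖n‖ = 1) (ρ θ t : ℝ)
    (hρ : 0 < ρ) (hθ : θ ∈ Set.Ioo 0 (π / 2)) (ht : 0 < t) (ht2 : t < ρ / 2) :
    Metric.ball (t • n) (t * Real.sin θ) ⊆ cone N ρ θ n := by
  intro y hy
  simp only [Metric.mem_ball, dist_eq_norm] at hy
  have hcos : 0 < Real.cos θ :=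
    Real.cos_pos_of_mem_Ioo ⟨by linarith [hθ.1, Real.pi_pos], hθ.2⟩
  have hsin1 : Real.sin θ ≤ 1 := Real.sin_le_one θ
  have htn : ‖t • n‖ = t := by
    rw [norm_smul, hn, Real.norm_eq_abs, abs_of_pos ht, mul_one]
  have hkey : ‖y - t • n‖ ^ 2 = ‖y‖ ^ 2 - 2 * t * ⟪y, n⟫ + t ^ 2 := by
    rw [norm_sub_sq_real, real_inner_smul_right, htn]
    ring
  have hsq : ‖y - t • n‖ ^ 2 < (t * Real.sin θ) ^ 2 :=
    pow_lt_pow_left₀ hy (norm_nonneg _) (by norm_num)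
  have hpyth : Real.sin θ ^ 2 = 1 - Real.cos θ ^ 2 := Real.sin_sq θ
  have H : ‖y‖ ^ 2 + t ^ 2 * Real.cos θ ^ 2 < 2 * t * ⟪y, n⟫ := by nlinarith
  have hCS : ⟪y, n⟫ ≤ ‖y‖ := by
    have := real_inner_le_norm y n
    rwa [hn, mul_one] at this
  refine ⟨?_, ?_, ?_⟩
  · nlinarith [norm_nonneg y, mul_pos (mul_pos ht ht) (mul_pos hcos hcos)]
  · have h1 : ‖y‖ - ‖t • n‖ ≤ ‖y - t • n‖ := norm_sub_norm_le y (t • n)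
    rw [htn] at h1
    nlinarith
  · nlinarith [sq_nonneg (‖y‖ - t * Real.cos θ)]
end
end
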